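/- In a three-dimensional real vector space with a rotation group D, the perpendicularity relation is symmetric: if w ⊥ v then v ⊥ w. -/

import Mathlib

/-!
For independent `v, w`, let `s ∈ D` send the ray `ℝ≥0 v` to `ℝ≥0 (-v)` and the half-plane
`ℝ v + ℝ≥0 w` to itself. Uniqueness gives `s² = 1`, which forces `s v = -v` and
`s w = a • v + w`. If `r ∈ D` witnesses `w ⊥ v`, then `(s r)²` fixes `v` and sends `w` to
`2a • v + w`, so it preserves that ray and half-plane and is the identity: `a = 0`, and `s`
witnesses `v ⊥ w`. For `w = 0` any such `s` works; one exists because `dim V ≥ 2`.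
-/

/-- The ray (half-line) spanned by `v`: all nonnegative multiples of `v`. -/
def Ray' {V : Type*} [AddCommGroup V] [Module ℝ V] (v : V) : Set V :=
  {x | ∃ c : ℝ, 0 ≤ c ∧ x = c • v}

/-- The half-plane `ℝ v + ℝ≥0 w`. -/
def HalfPlane {V : Type*} [AddCommGroup V] [Module ℝ V] (v w : V) : Set V :=
  {x | ∃ a b : ℝ, 0 ≤ b ∧ x = a • v + b • w}

/-- `D` is a rotation group: for any two pairs of (half-plane, ray on its boundary)
there is exactly one element of `D` mapping the first pair to the second. -/
def IsRotationGroup {V : Type*} [AddCommGroup V] [Module ℝ V]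
    (D : Subgroup (V ≃ₗ[ℝ] V)) : Prop :=
  ∀ v w v' w' : V, LinearIndependent ℝ ![v, w] → LinearIndependent ℝ ![v', w'] →
    ∃! d : V ≃ₗ[ℝ] V, d ∈ D ∧
      (d : V ≃ₗ[ℝ] V) '' HalfPlane v w = HalfPlane v' w' ∧
      (d : V ≃ₗ[ℝ] V) '' Ray' v = Ray' v'

/-- `w ⊥ v` : some rotation sends `w` to `-w` and fixes `v`. -/
def Perp {V : Type*} [AddCommGroup V] [Module ℝ V]
    (D : Subgroup (V ≃ₗ[ℝ] V)) (w v : V) : Prop :=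
  ∃ r ∈ D, r w = -w ∧ r v = v

section

variable {V : Type*} [AddCommGroup V] [Module ℝ V]

theorem ray'_smul_of_pos {c : ℝ} (hc : 0 < c) (v : V) : Ray' (c • v) = Ray' v := by
  ext x
  constructor
  · rintro ⟨t, ht, rfl⟩
    exact ⟨t * c, by positivity, by rw [smul_smul]⟩
  · rintro ⟨t, ht, rfl⟩
    exact ⟨t / c, by positivity, by rw [smul_smul, div_mul_cancel₀ _ hc.ne']⟩

theorem self_mem_ray' (v : V) : v ∈ Ray' v := ⟨1, zero_le_one, (one_smul ℝ v).symm⟩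

theorem exists_pos_smul_of_mem_ray' {x v : V} (hx : x ∈ Ray' v) (hx0 : x ≠ 0) :
    ∃ c : ℝ, 0 < c ∧ x = c • v := by
  obtain ⟨c, hc, rfl⟩ := hx
  exact ⟨c, hc.lt_of_ne (by rintro rfl; simp at hx0), rfl⟩

theorem halfPlane_smul_left {c : ℝ} (hc : c ≠ 0) (v w : V) :
    HalfPlane (c • v) w = HalfPlane v w := by
  ext x
  constructor
  · rintro ⟨a, b, hb, rfl⟩
    exact ⟨a * c, b, hb, by rw [smul_smul]⟩
  · rintro ⟨a, b, hb, rfl⟩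
    exact ⟨a / c, b, hb, by rw [smul_smul, div_mul_cancel₀ _ hc]⟩

theorem halfPlane_add_smul_right (v w : V) (a : ℝ) {b : ℝ} (hb : 0 < b) :
    HalfPlane v (a • v + b • w) = HalfPlane v w := by
  ext x
  constructor
  · rintro ⟨p, q, hq, rfl⟩
    exact ⟨p + q * a, q * b, by positivity, by module⟩
  · rintro ⟨p, q, hq, rfl⟩
    refine ⟨p - q / b * a, q / b, by positivity, ?_⟩
    match_scalars
    · ring
    · field_simp

theorem right_mem_halfPlane (v w : V) : w ∈ HalfPlane v w := ⟨0, 1, zero_le_one, by module⟩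

theorem exists_pos_of_mem_halfPlane {v w x : V} (hx : x ∈ HalfPlane v w)
    (hvx : LinearIndependent ℝ ![v, x]) : ∃ a b : ℝ, 0 < b ∧ x = a • v + b • w := by
  obtain ⟨a, b, hb, rfl⟩ := hx
  refine ⟨a, b, hb.lt_of_ne ?_, rfl⟩
  rintro rfl
  rw [LinearIndependent.pair_iff] at hvx
  simpa using hvx a (-1) (by module)

theorem LinearEquiv.image_ray' (d : V ≃ₗ[ℝ] V) (v : V) : d '' Ray' v = Ray' (d v) := by
  ext x
  constructor
  · rintro ⟨y, ⟨c, hc, rfl⟩, rfl⟩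
    exact ⟨c, hc, map_smul d c v⟩
  · rintro ⟨c, hc, rfl⟩
    exact ⟨c • v, ⟨c, hc, rfl⟩, map_smul d c v⟩

theorem LinearEquiv.image_halfPlane (d : V ≃ₗ[ℝ] V) (v w : V) :
    d '' HalfPlane v w = HalfPlane (d v) (d w) := by
  ext x
  constructor
  · rintro ⟨y, ⟨a, b, hb, rfl⟩, rfl⟩
    exact ⟨a, b, hb, by simp⟩
  · rintro ⟨a, b, hb, rfl⟩
    exact ⟨a • v + b • w, ⟨a, b, hb, rfl⟩, by simp⟩

theorem LinearIndependent.pair_map_linearEquiv {v w : V} (h : LinearIndependent ℝ ![v, w])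
    (d : V ≃ₗ[ℝ] V) : LinearIndependent ℝ ![d v, d w] := by
  rw [LinearIndependent.pair_iff] at h ⊢
  intro s t hst
  exact h s t (d.injective (by simpa using hst))

theorem linearIndependent_of_perp {D : Subgroup (V ≃ₗ[ℝ] V)} {v w : V} (h : Perp D w v)
    (hv : v ≠ 0) (hw : w ≠ 0) : LinearIndependent ℝ ![v, w] := by
  obtain ⟨r, -, hrw, hrv⟩ := h
  rw [LinearIndependent.pair_iff' hv]
  rintro a rfl
  rw [map_smul, hrv] at hrw
  have : IsAddTorsionFree V := .of_isTorsionFree ℝ V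
  exact hw (self_eq_neg.mp hrw)

namespace IsRotationGroup

variable {D : Subgroup (V ≃ₗ[ℝ] V)} (hD : IsRotationGroup D)
include hD

theorem eq_one_of_apply_eq {p q : V} (hpq : LinearIndependent ℝ ![p, q]) {d : V ≃ₗ[ℝ] V}
    (hd : d ∈ D) {c a b : ℝ} (hc : 0 < c) (hb : 0 < b) (hdp : d p = c • p)
    (hdq : d q = a • p + b • q) : d = 1 := by
  refine (hD p q p q hpq hpq).unique ⟨hd, ?_, ?_⟩ ⟨one_mem D, by simp, by simp⟩
  · rw [d.image_halfPlane, hdp, hdq, halfPlane_smul_left hc.ne', halfPlane_add_smul_right _ _ _ hb]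
  · rw [d.image_ray', hdp, ray'_smul_of_pos hc]

theorem exists_halfTurn {p q : V} (hpq : LinearIndependent ℝ ![p, q]) :
    ∃ s ∈ D, s p = -p ∧ ∃ a : ℝ, s q = a • p + q := by
  obtain ⟨d, ⟨hdD, hdH, hdR⟩, -⟩ := hD p q (-p) q hpq (by simpa using hpq)
  have hp : p ≠ 0 := hpq.ne_zero 0
  obtain ⟨c, hc, hdp⟩ : ∃ c : ℝ, 0 < c ∧ d p = c • -p :=
    exists_pos_smul_of_mem_ray' (hdR ▸ Set.mem_image_of_mem d (self_mem_ray' p))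
      (d.map_ne_zero_iff.mpr hp)
  rw [d.image_halfPlane, ← halfPlane_smul_left hc.ne' (-p) q, ← hdp] at hdH
  obtain ⟨a, b, hb, hdq⟩ :=
    exists_pos_of_mem_halfPlane (hdH ▸ right_mem_halfPlane _ _) (hpq.pair_map_linearEquiv d)
  have hddp : (d * d) p = (c * c) • p := by
    simp only [LinearEquiv.mul_apply, hdp, map_smul, map_neg]
    module
  have hddq : (d * d) q = (a * c * c - b * a * c) • p + (b * b) • q := by
    simp only [LinearEquiv.mul_apply, hdq, hdp, map_add, map_smul, map_neg]
    module
  have hdd :=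
    hD.eq_one_of_apply_eq hpq (mul_mem hdD hdD) (mul_pos hc hc) (mul_pos hb hb) hddp hddq
  rw [hdd, LinearEquiv.coe_one, id] at hddp hddq
  have hc1 : c = 1 := by
    have := (hpq.eq_of_pair (t := 0) (s' := 1) (t' := 0) (by rw [← hddp]; module)).1
    nlinarith
  have hb1 : b = 1 := by
    have := (hpq.eq_of_pair (s' := 0) (t' := 1) (by rw [← hddq]; module)).2
    nlinarith
  exact ⟨d, hdD, by rw [hdp, hc1, one_smul], -a, by rw [hdq, hdp, hb1, hc1]; module⟩

theorem perp_symm_of_linearIndependent {v w : V} (hvw : LinearIndependent ℝ ![v, w])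
    (h : Perp D w v) : Perp D v w := by
  obtain ⟨r, hrD, hrw, hrv⟩ := h
  obtain ⟨s, hsD, hsv, a, hsw⟩ := hD.exists_halfTurn hvw
  have hsrv : (s * r * (s * r)) v = (1 : ℝ) • v := by
    simp only [LinearEquiv.mul_apply, hrv, hsv, map_neg]
    module
  have hsrw : (s * r * (s * r)) w = (2 * a) • v + (1 : ℝ) • w := by
    simp only [LinearEquiv.mul_apply, hrw, hsw, hrv, hsv, map_neg, map_add, map_smul]
    module
  have hsr := hD.eq_one_of_apply_eq hvw (mul_mem (mul_mem hsD hrD) (mul_mem hsD hrD))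
    one_pos one_pos hsrv hsrw
  rw [hsr, LinearEquiv.coe_one, id] at hsrw
  have ha : a = 0 := by
    have := (hvw.eq_of_pair (s' := 0) (t' := 1) (by rw [← hsrw]; module)).1
    linarith
  exact ⟨s, hsD, hsv, by rw [hsw, ha, zero_smul, zero_add]⟩

theorem perp_zero_right (hV : 1 < Module.finrank ℝ V) {v : V} (hv : v ≠ 0) : Perp D v 0 := by
  obtain ⟨u, hvu⟩ := exists_linearIndependent_pair_of_one_lt_finrank hV hv
  obtain ⟨s, hsD, hsv, -⟩ := hD.exists_halfTurn hvu
  exact ⟨s, hsD, hsv, map_zero s⟩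

end IsRotationGroup

end

theorem stmt3 {V : Type*} [AddCommGroup V] [Module ℝ V]
    (hdim : Module.finrank ℝ V = 3)
    (D : Subgroup (V ≃ₗ[ℝ] V)) (hD : IsRotationGroup D)
    (v w : V) (h : Perp D w v) : Perp D v w := by
  rcases eq_or_ne v 0 with rfl | hv
  · exact ⟨1, one_mem D, neg_zero.symm, rfl⟩
  rcases eq_or_ne w 0 with rfl | hw
  · exact hD.perp_zero_right (by omega) hv
  · exact hD.perp_symm_of_linearIndependent (linearIndependent_of_perp h hv hw) h
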